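/- Let b > 1. The solution of the radially symmetric heat equation on ℝ³ \ B₁(0) with Dirichlet boundary condition and initial data φ = 𝟙_{ρ > b} satisfies: for every fixed r > 1, (S₁(t)φ)(r) = (√t/(r√π))(e^{-(b−r)²/(4t)} − e^{-(b+r−2)²/(4t)}) + (1/√π) ∫_{(b−r)/(2√t)}^∞ e^{-z²} dz + ((r−2)/(r√π)) ∫_{(b+r−2)/(2√t)}^∞ e^{-z²} dz, and consequently (S₁(t)φ)(r) → 1 − 1/r as t → ∞. -/

import Mathlib

/-!
After the substitutions `ρ = r + u` and `ρ = 2 - r + u`, each half of the kernel becomes a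
first moment plus a multiple of the mass of the Gaussian `exp (-u² / 4t)` on a half-line.
The first moment is elementary, `2t exp (-c² / 4t)`, and the mass rescales to a tail of
`exp (-z²)`. As `t → ∞` the two moment terms differ by `O(1 / t)`, which `√t` does not
compensate, while both tails tend to `√π / 2`; this gives `1/2 + (r - 2) / (2r) = 1 - 1/r`.
-/

open Real MeasureTheory Filter Topology

/-- The radially symmetric Dirichlet heat semigroup on ℝ³ \ B₁(0), applied to the indicator
function of {ρ > b}. -/
noncomputable def S1ind (b t r : ℝ) : ℝ :=
  (1 / (r * Real.sqrt (4 * π * t))) *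
    ∫ ρ in Set.Ioi b,
      (Real.exp (-(r - ρ) ^ 2 / (4 * t)) - Real.exp (-(r + ρ - 2) ^ 2 / (4 * t))) * ρ

open Set

theorem integral_Ioi_comp_sub_right (g : ℝ → ℝ) (b m : ℝ) :
    ∫ x in Ioi b, g (x - m) = ∫ u in Ioi (b - m), g u := by
  simpa [preimage_sub_const_Ioi, sub_eq_add_neg] using
    (measurePreserving_add_right (volume : Measure ℝ) (-m)).setIntegral_preimage_emb
      (measurableEmbedding_addRight (-m)) g (Ioi (b - m))

theorem MeasureTheory.Integrable.continuous_integral_Ioi {f : ℝ → ℝ} (hf : Integrable f) :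
    Continuous fun a => ∫ x in Ioi a, f x := by
  have h : (fun a => ∫ x in Ioi a, f x) = fun a => (∫ x in Ioi 0, f x) - ∫ x in 0..a, f x :=
    funext fun a => eq_sub_of_add_eq'
      (intervalIntegral.integral_interval_add_Ioi hf.integrableOn hf.integrableOn)
  rw [h]
  exact continuous_const.sub (hf.continuous_primitive 0)

theorem exp_neg_sq_div_eq (t x : ℝ) : exp (-x ^ 2 / (4 * t)) = exp (-(1 / (4 * t)) * x ^ 2) := by
  ring_nf

section HeatKernel

variable {t : ℝ}

theorem integrable_exp_neg_sq_div (ht : 0 < t) :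
    Integrable fun x : ℝ => exp (-x ^ 2 / (4 * t)) := by
  simpa only [exp_neg_sq_div_eq] using integrable_exp_neg_mul_sq (by positivity : 0 < 1 / (4 * t))

theorem integrable_mul_exp_neg_sq_div (ht : 0 < t) :
    Integrable fun x : ℝ => x * exp (-x ^ 2 / (4 * t)) := by
  simpa only [exp_neg_sq_div_eq] using
    integrable_mul_exp_neg_mul_sq (by positivity : 0 < 1 / (4 * t))

theorem integral_Ioi_mul_exp_neg_sq_div (ht : 0 < t) (c : ℝ) :
    ∫ x in Ioi c, x * exp (-x ^ 2 / (4 * t)) = 2 * t * exp (-c ^ 2 / (4 * t)) := by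
  have hderiv : ∀ x ∈ Ici c, HasDerivAt (fun x => -(2 * t) * exp (-x ^ 2 / (4 * t)))
      (x * exp (-x ^ 2 / (4 * t))) x := by
    intro x _
    refine (((hasDerivAt_pow 2 x).neg.div_const (4 * t)).exp.const_mul (-(2 * t))).congr_deriv ?_
    simp only [Pi.neg_apply]
    field_simp
    ring
  have hlim : Tendsto (fun x => -(2 * t) * exp (-x ^ 2 / (4 * t))) atTop (𝓝 0) := by
    have h : Tendsto (fun x : ℝ => -x ^ 2 / (4 * t)) atTop atBot :=
      (tendsto_neg_atTop_atBot.comp (tendsto_pow_atTop two_ne_zero)).atBot_div_const (by positivity)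
    simpa using (tendsto_exp_atBot.comp h).const_mul (-(2 * t))
  rw [integral_Ioi_of_hasDerivAt_of_tendsto' hderiv
    (integrable_mul_exp_neg_sq_div ht).integrableOn hlim]
  ring

theorem integral_Ioi_exp_neg_sq_div (ht : 0 < t) (c : ℝ) :
    ∫ x in Ioi c, exp (-x ^ 2 / (4 * t))
      = 2 * √t * ∫ z in Ioi (c / (2 * √t)), exp (-z ^ 2) := by
  have h := integral_comp_mul_left_Ioi (fun z => exp (-z ^ 2)) c
    (inv_pos.mpr (by positivity : 0 < 2 * √t))
  rw [inv_inv, smul_eq_mul, inv_mul_eq_div] at h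
  rw [← h]
  refine setIntegral_congr_fun measurableSet_Ioi fun x _ => ?_
  congr 1
  field_simp
  rw [sq_sqrt ht.le]
  ring

theorem integrable_exp_neg_sub_sq_div_mul_self (ht : 0 < t) (m : ℝ) :
    Integrable fun ρ : ℝ => exp (-(ρ - m) ^ 2 / (4 * t)) * ρ := by
  refine (((integrable_mul_exp_neg_sq_div ht).add
    ((integrable_exp_neg_sq_div ht).const_mul m)).comp_sub_right m).congr
    (Eventually.of_forall fun ρ => ?_)
  simp only [Pi.add_apply]
  ring

theorem integral_Ioi_exp_neg_sub_sq_div_mul_self (ht : 0 < t) (b m : ℝ) :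
    ∫ ρ in Ioi b, exp (-(ρ - m) ^ 2 / (4 * t)) * ρ
      = 2 * t * exp (-(b - m) ^ 2 / (4 * t))
        + m * (2 * √t * ∫ z in Ioi ((b - m) / (2 * √t)), exp (-z ^ 2)) := by
  have h := integral_Ioi_comp_sub_right (fun u => exp (-u ^ 2 / (4 * t)) * (u + m)) b m
  simp only [sub_add_cancel] at h
  rw [h, ← integral_Ioi_mul_exp_neg_sq_div ht, ← integral_Ioi_exp_neg_sq_div ht,
    ← integral_const_mul, ← integral_add (integrable_mul_exp_neg_sq_div ht).integrableOn
      ((integrable_exp_neg_sq_div ht).const_mul m).integrableOn]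
  exact setIntegral_congr_fun measurableSet_Ioi fun u _ => by ring

end HeatKernel

theorem S1ind_eq (b : ℝ) {r t : ℝ} (hr : r ≠ 0) (ht : 0 < t) :
    S1ind b t r =
      (√t / (r * √π)) * (exp (-(b - r) ^ 2 / (4 * t)) - exp (-(b + r - 2) ^ 2 / (4 * t)))
        + (1 / √π) * (∫ z in Ioi ((b - r) / (2 * √t)), exp (-z ^ 2))
        + ((r - 2) / (r * √π)) * ∫ z in Ioi ((b + r - 2) / (2 * √t)), exp (-z ^ 2) := by
  have h_split : ∫ ρ in Ioi b,
      (exp (-(r - ρ) ^ 2 / (4 * t)) - exp (-(r + ρ - 2) ^ 2 / (4 * t))) * ρ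
      = (∫ ρ in Ioi b, exp (-(ρ - r) ^ 2 / (4 * t)) * ρ)
        - ∫ ρ in Ioi b, exp (-(ρ - (2 - r)) ^ 2 / (4 * t)) * ρ := by
    rw [← integral_sub (integrable_exp_neg_sub_sq_div_mul_self ht r).integrableOn
      (integrable_exp_neg_sub_sq_div_mul_self ht (2 - r)).integrableOn]
    exact setIntegral_congr_fun measurableSet_Ioi fun ρ _ => by ring_nf
  have h_sqrt : √(4 * π * t) = 2 * √π * √t := by
    rw [sqrt_mul' _ ht.le, sqrt_mul' _ pi_pos.le, show (4 : ℝ) = 2 ^ 2 by norm_num,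
      sqrt_sq zero_le_two]
  rw [S1ind, h_split, integral_Ioi_exp_neg_sub_sq_div_mul_self ht,
    integral_Ioi_exp_neg_sub_sq_div_mul_self ht, h_sqrt, show b - (2 - r) = b + r - 2 by ring]
  generalize exp (-(b - r) ^ 2 / (4 * t)) = E₁
  generalize exp (-(b + r - 2) ^ 2 / (4 * t)) = E₂
  generalize ∫ z in Ioi ((b - r) / (2 * √t)), exp (-z ^ 2) = J₁
  generalize ∫ z in Ioi ((b + r - 2) / (2 * √t)), exp (-z ^ 2) = J₂
  field_simp
  linear_combination (E₂ - E₁) * sq_sqrt ht.le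

theorem tendsto_integral_Ioi_exp_neg_sq_div_sqrt (c : ℝ) :
    Tendsto (fun t => ∫ z in Ioi (c / (2 * √t)), exp (-z ^ 2)) atTop (𝓝 (√π / 2)) := by
  have h_arg : Tendsto (fun t => c / (2 * √t)) atTop (𝓝 0) :=
    tendsto_const_nhds.div_atTop (tendsto_sqrt_atTop.const_mul_atTop two_pos)
  have h_cont : Continuous fun a => ∫ x in Ioi a, exp (-x ^ 2) := by
    simpa using (integrable_exp_neg_mul_sq one_pos).continuous_integral_Ioi
  have h_half : ∫ x in Ioi 0, exp (-x ^ 2) = √π / 2 := by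
    simpa using integral_gaussian_Ioi 1
  simpa only [Function.comp_def, h_half] using (h_cont.tendsto 0).comp h_arg

theorem tendsto_sqrt_mul_exp_div_sub_one (a : ℝ) :
    Tendsto (fun t => √t * (exp (a / t) - 1)) atTop (𝓝 0) := by
  have h_bound : ∀ᶠ t in atTop, ‖√t * (exp (a / t) - 1)‖ ≤ 2 * |a| / √t := by
    filter_upwards [eventually_ge_atTop (max |a| 1)] with t ht
    have ht0 : 0 < t := one_pos.trans_le (le_of_max_le_right ht)
    have hs : 0 < √t := sqrt_pos.mpr ht0
    have h_small : |a / t| ≤ 1 := by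
      rw [abs_div, abs_of_pos ht0, div_le_one ht0]
      exact le_of_max_le_left ht
    calc ‖√t * (exp (a / t) - 1)‖ = √t * |exp (a / t) - 1| := by
          rw [norm_mul, norm_of_nonneg hs.le, Real.norm_eq_abs]
      _ ≤ √t * (2 * |a / t|) := by gcongr; exact abs_exp_sub_one_le h_small
      _ = 2 * |a| / √t := by
          rw [abs_div, abs_of_pos ht0]
          field_simp
          rw [sq_sqrt ht0.le, mul_comm]
  exact squeeze_zero_norm' h_bound
    (tendsto_const_nhds.div_atTop tendsto_sqrt_atTop)

theorem tendsto_sqrt_mul_exp_div_sub_exp_div (a c : ℝ) :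
    Tendsto (fun t => √t * (exp (a / t) - exp (c / t))) atTop (𝓝 0) := by
  simpa [mul_sub] using
    (tendsto_sqrt_mul_exp_div_sub_one a).sub (tendsto_sqrt_mul_exp_div_sub_one c)

theorem stmt_16_general (b : ℝ) (r : ℝ) (hr : 1 < r) :
    (∀ t : ℝ, 0 < t →
        S1ind b t r =
          (Real.sqrt t / (r * Real.sqrt π)) *
              (Real.exp (-(b - r) ^ 2 / (4 * t)) - Real.exp (-(b + r - 2) ^ 2 / (4 * t)))
            + (1 / Real.sqrt π) * (∫ z in Set.Ioi ((b - r) / (2 * Real.sqrt t)), Real.exp (-z ^ 2))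
            + ((r - 2) / (r * Real.sqrt π)) *
                ∫ z in Set.Ioi ((b + r - 2) / (2 * Real.sqrt t)), Real.exp (-z ^ 2))
      ∧ Tendsto (fun t => S1ind b t r) atTop (𝓝 (1 - 1 / r)) := by
  have hr0 : r ≠ 0 := (zero_lt_one.trans hr).ne'
  refine ⟨fun t ht => S1ind_eq b hr0 ht, ?_⟩
  have h_exp := (tendsto_sqrt_mul_exp_div_sub_exp_div (-(b - r) ^ 2 / 4)
    (-(b + r - 2) ^ 2 / 4)).const_mul (1 / (r * √π))
  have h_near := (tendsto_integral_Ioi_exp_neg_sq_div_sqrt (b - r)).const_mul (1 / √π)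
  have h_far := (tendsto_integral_Ioi_exp_neg_sq_div_sqrt (b + r - 2)).const_mul
    ((r - 2) / (r * √π))
  have h_value : 1 / (r * √π) * 0 + 1 / √π * (√π / 2) + (r - 2) / (r * √π) * (√π / 2)
      = 1 - 1 / r := by
    field_simp
    ring
  rw [← h_value]
  refine ((h_exp.add h_near).add h_far).congr' ?_
  filter_upwards [eventually_gt_atTop 0] with t ht
  rw [S1ind_eq b hr0 ht]
  simp only [div_div]
  ring

theorem stmt_16 (b : ℝ) (hb : 1 < b) (r : ℝ) (hr : 1 < r) :
    (∀ t : ℝ, 0 < t →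
        S1ind b t r =
          (Real.sqrt t / (r * Real.sqrt π)) *
              (Real.exp (-(b - r) ^ 2 / (4 * t)) - Real.exp (-(b + r - 2) ^ 2 / (4 * t)))
            + (1 / Real.sqrt π) * (∫ z in Set.Ioi ((b - r) / (2 * Real.sqrt t)), Real.exp (-z ^ 2))
            + ((r - 2) / (r * Real.sqrt π)) *
                ∫ z in Set.Ioi ((b + r - 2) / (2 * Real.sqrt t)), Real.exp (-z ^ 2))
      ∧ Tendsto (fun t => S1ind b t r) atTop (𝓝 (1 - 1 / r)) :=
  stmt_16_general b r hr
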